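/- The O(2) subgroup of U(2) generated by S(U(1)×U(1)) and the matrix [[0,−1],[−1,0]] is exactly the preimage of the point ([[1:0]], 1) under the map U(2) → (ℂP¹ × S¹)/ℤ₂ sending A ↦ [([A·(1,0)ᵀ], det A)], where ℤ₂ acts by the antipodal map on both factors. Consequently, U(2)/O(2) for this O(2) is diffeomorphic to (S² × S¹)/ℤ₂. -/

import Mathlib

/-!
Every `A ∈ U(2)` has the form `!![z, -w̄ δ; w, z̄ δ]` with `δ = det A`. Hence for `a, b ∈ U(2)`
the entry `(a⁻¹ b)₁₀` is a unit multiple of `a₀₀ b₁₀ - a₁₀ b₀₀`, which vanishes iff the first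
columns have the same image under the Hopf map `S³ → S² ≅ ℂP¹`, while `(a⁻¹ b)₀₀ = ⟨a e₁, b e₁⟩`
vanishes iff these images are antipodal. So the fibres of `U(2) → (S² × S¹)/ℤ₂` are exactly the
left cosets of `PreSet`; in particular `PreSet` is a subgroup, and since its elements are diagonal
or `[[0,−1],[−1,0]]` times a diagonal one, it is `O2`. The induced map `U(2)/O(2) → (S² × S¹)/ℤ₂`
is a continuous bijection from a compact space onto a Hausdorff one (`(v, s) ↦ s v ∈ ℂ³`
separates the `ℤ₂`-orbits), hence a homeomorphism.
-/

open Complex Matrix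

noncomputable section

/-- `U(2)`. -/
abbrev U2 := Matrix.unitaryGroup (Fin 2) ℂ

/-- The generating set: `S(U(1)×U(1))` (diagonal special unitary matrices) together with the
matrix `[[0,−1],[−1,0]]`. -/
def Sgen : Set U2 :=
  {g | (g : Matrix (Fin 2) (Fin 2) ℂ) 0 1 = 0 ∧ (g : Matrix (Fin 2) (Fin 2) ℂ) 1 0 = 0 ∧
        (g : Matrix (Fin 2) (Fin 2) ℂ).det = 1} ∪
  {g | (g : Matrix (Fin 2) (Fin 2) ℂ) = !![0, -1; -1, 0]}

/-- The `O(2)` subgroup of `U(2)` generated by `S(U(1)×U(1))` and `[[0,−1],[−1,0]]`. -/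
def O2 : Subgroup U2 := Subgroup.closure Sgen

/-- The preimage of the point `([1:0], 1) ∈ (ℂP¹ × S¹)/ℤ₂` under
`A ↦ [([A(1,0)ᵀ], det A)]`: since `ℤ₂` acts antipodally on both factors, membership means
either `A(1,0)ᵀ ∥ (1,0)ᵀ` and `det A = 1`, or `A(1,0)ᵀ ∥ (0,1)ᵀ` (the antipode of `[1:0]`)
and `det A = −1`. -/
def PreSet : Set U2 :=
  {A | ((∃ c : ℂ, c ≠ 0 ∧ (A : Matrix (Fin 2) (Fin 2) ℂ).mulVec ![1, 0] = c • ![1, 0]) ∧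
          (A : Matrix (Fin 2) (Fin 2) ℂ).det = 1) ∨
       ((∃ c : ℂ, c ≠ 0 ∧ (A : Matrix (Fin 2) (Fin 2) ℂ).mulVec ![1, 0] = c • ![0, 1]) ∧
          (A : Matrix (Fin 2) (Fin 2) ℂ).det = -1)}

/-- The unit sphere `S² ⊂ ℝ³`. -/
def Sph : Type := {v : EuclideanSpace ℝ (Fin 3) // ‖v‖ = 1}

instance : TopologicalSpace Sph := by unfold Sph; infer_instance

/-- The antipodal relation on `S² × S¹` generating the `ℤ₂`-quotient. -/
def relA : Sph × Circle → Sph × Circle → Prop := fun a b =>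
  b.1.1 = -a.1.1 ∧
    (b.2 : ℂ) = -(a.2 : ℂ)

open ComplexConjugate

def Subgroup.ofFibers {G X : Type*} [Group G] (f : G → X) (S : Set G)
    (hf : ∀ a b, f a = f b ↔ a⁻¹ * b ∈ S) : Subgroup G where
  carrier := S
  one_mem' := by simpa using (hf 1 1).1 rfl
  mul_mem' {a b} ha hb := by
    have h1 : f 1 = f a := (hf 1 a).2 (by simpa using ha)
    have h2 : f a = f (a * b) := (hf a (a * b)).2 (by simpa using hb)
    simpa using (hf 1 (a * b)).1 (h1.trans h2)
  inv_mem' {a} ha := by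
    simpa using (hf a 1).1 ((hf 1 a).2 (by simpa using ha)).symm

lemma mul_eq_iff_eq_mul_of_mul_eq_one {R : Type*} [CommRing R] {u' u v c : R} (hu : u' * u = 1) :
    u' * v = c ↔ v = c * u := by
  constructor <;> intro h
  · linear_combination (-v) * hu + u * h
  · linear_combination c * hu + u' * h

lemma sum_sq_of_norm_eq_one {v : EuclideanSpace ℝ (Fin 3)} (hv : ‖v‖ = 1) :
    v 0 ^ 2 + v 1 ^ 2 + v 2 ^ 2 = 1 := by
  simpa [EuclideanSpace.norm_eq, Fin.sum_univ_three] using hv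

namespace U2

variable (A : U2)

lemma adjugate_eq_det_smul_star : adjugate A.1 = A.1.det • star A.1 := by
  calc adjugate A.1 = adjugate A.1 * (A.1 * star A.1) := by
        rw [Matrix.mem_unitaryGroup_iff.1 A.2, Matrix.mul_one]
    _ = A.1.det • star A.1 := by rw [← Matrix.mul_assoc, adjugate_mul, smul_mul, Matrix.one_mul]

lemma apply_zero_one : A.1 0 1 = -conj (A.1 1 0) * A.1.det := by
  have := congrFun₂ (adjugate_eq_det_smul_star A) 0 1
  simp only [adjugate_fin_two, of_apply, cons_val', cons_val_one, cons_val_fin_one, cons_val_zero,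
    Matrix.smul_apply, star_apply, RCLike.star_def, smul_eq_mul] at this
  linear_combination -this

lemma apply_one_one : A.1 1 1 = conj (A.1 0 0) * A.1.det := by
  have := congrFun₂ (adjugate_eq_det_smul_star A) 0 0
  simp only [adjugate_fin_two, of_apply, cons_val', cons_val_zero, cons_val_fin_one,
    Matrix.smul_apply, star_apply, RCLike.star_def, smul_eq_mul] at this
  linear_combination this

lemma normSq_col_zero : normSq (A.1 0 0) + normSq (A.1 1 0) = 1 := by
  have := congrFun₂ (Matrix.mem_unitaryGroup_iff'.1 A.2) 0 0
  simp only [Matrix.mul_apply, Fin.sum_univ_two, Matrix.star_apply, Matrix.one_apply_eq,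
    RCLike.star_def, ← Complex.normSq_eq_conj_mul_self] at this
  exact_mod_cast this

lemma conj_det_mul_det : conj A.1.det * A.1.det = 1 := (Matrix.det_of_mem_unitary A.2).1

lemma inv_mul_apply (B : U2) (i j : Fin 2) :
    (A⁻¹ * B).1 i j = conj (A.1 0 i) * B.1 0 j + conj (A.1 1 i) * B.1 1 j := by
  simp [Matrix.UnitaryGroup.inv_val, Matrix.mul_apply, Fin.sum_univ_two]

lemma det_inv_mul (B : U2) : (A⁻¹ * B).1.det = conj A.1.det * B.1.det := by
  simp [Matrix.UnitaryGroup.inv_val, Matrix.star_eq_conjTranspose, Matrix.det_conjTranspose]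

lemma inv_mul_apply_one_zero_eq_zero_iff (B : U2) :
    (A⁻¹ * B).1 1 0 = 0 ↔ A.1 0 0 * B.1 1 0 = A.1 1 0 * B.1 0 0 := by
  have hdet : conj A.1.det ≠ 0 := by
    intro h
    simpa [h] using conj_det_mul_det A
  rw [inv_mul_apply, apply_zero_one, apply_one_one]
  simp only [map_mul, map_neg, Complex.conj_conj]
  rw [show -A.1 1 0 * conj A.1.det * B.1 0 0 + A.1 0 0 * conj A.1.det * B.1 1 0
      = conj A.1.det * (A.1 0 0 * B.1 1 0 - A.1 1 0 * B.1 0 0) by ring,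
    mul_eq_zero, sub_eq_zero, or_iff_right hdet]

end U2

lemma mem_unitaryGroup_fin_two {z w s : ℂ} (h : conj z * z + conj w * w = 1)
    (hs : conj s * s = 1) : !![z, -conj w * s; w, conj z * s] ∈ unitaryGroup (Fin 2) ℂ := by
  rw [mem_unitaryGroup_iff']
  ext i j
  fin_cases i <;> fin_cases j <;>
    simp only [Fin.zero_eta, Fin.mk_one, Fin.isValue, mul_apply, star_apply, of_apply, cons_val',
      cons_val_zero, cons_val_one, cons_val_fin_one, RCLike.star_def, Fin.sum_univ_two, map_neg,
      map_mul, Complex.conj_conj, one_apply_eq, one_apply_ne, ne_eq, zero_ne_one, one_ne_zero,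
      not_false_eq_true]
  · exact h
  · ring
  · ring
  · linear_combination (conj w * w + conj z * z) * hs + h

instance : CompactSpace U2 := by
  have hclosed : IsClosed (unitaryGroup (Fin 2) ℂ : Set (Matrix (Fin 2) (Fin 2) ℂ)) :=
    isClosed_unitary
  open scoped Matrix.Norms.Elementwise in
  exact isCompact_iff_compactSpace.mp <|
    (isCompact_closedBall (0 : Matrix (Fin 2) (Fin 2) ℂ) 1).of_isClosed_subset hclosed
      fun _ hA => mem_closedBall_zero_iff.2 (entrywise_sup_norm_bound_of_unitary hA)

lemma mulVec_one_zero {R : Type*} [NonAssocSemiring R] (M : Matrix (Fin 2) (Fin 2) R) :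
    M.mulVec ![1, 0] = ![M 0 0, M 1 0] := by
  ext i
  fin_cases i <;> simp [mulVec, dotProduct, Fin.sum_univ_two]

lemma mem_preSet_iff (A : U2) :
    A ∈ PreSet ↔ (A.1 1 0 = 0 ∧ A.1.det = 1) ∨ (A.1 0 0 = 0 ∧ A.1.det = -1) := by
  have hcol := U2.normSq_col_zero A
  simp only [PreSet, Set.mem_ofPred_eq, mulVec_one_zero]
  have h00 : A.1 1 0 = 0 → A.1 0 0 ≠ 0 := fun h h' => by simp [h, h'] at hcol
  have h10 : A.1 0 0 = 0 → A.1 1 0 ≠ 0 := fun h h' => by simp [h, h'] at hcol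
  simp [Matrix.smul_cons, and_iff_right_of_imp h00, and_iff_right_of_imp h10]

-- For `|z|² + |w|² = 1` this is the point `[z : w]` of `ℂP¹`, seen on the sphere `S²`.
def hopf (z w : ℂ) : EuclideanSpace ℝ (Fin 3) :=
  !₂[2 * (z * conj w).re, 2 * (z * conj w).im, normSq z - normSq w]

section hopf

variable {z w z' w' : ℂ}

lemma hopf_eq_hopf_iff :
    hopf z' w' = hopf z w ↔
      z' * conj w' = z * conj w ∧ normSq z' - normSq w' = normSq z - normSq w := by
  simp only [hopf, WithLp.toLp.injEq, Matrix.vecCons_inj, and_true, Complex.ext_iff]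
  constructor
  · rintro ⟨hre, him, hn⟩
    exact ⟨⟨by linarith, by linarith⟩, hn⟩
  · rintro ⟨⟨hre, him⟩, hn⟩
    exact ⟨by rw [hre], by rw [him], hn⟩

lemma hopf_neg_conj : hopf (-conj w) (conj z) = -hopf z w := by
  ext i
  fin_cases i <;> simp [hopf, mul_comm] <;> ring

lemma norm_hopf (h : normSq z + normSq w = 1) : ‖hopf z w‖ = 1 := by
  have hcross : (z * conj w).re ^ 2 + (z * conj w).im ^ 2 = normSq z * normSq w := by
    rw [sq, sq, ← Complex.normSq_apply, Complex.normSq_mul, Complex.normSq_conj]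
  rw [EuclideanSpace.norm_eq, Real.sqrt_eq_one, Fin.sum_univ_three]
  simp only [hopf, Real.norm_eq_abs, sq_abs, PiLp.toLp_apply, Matrix.cons_val_zero,
    Matrix.cons_val_one, Matrix.cons_val_two, Matrix.head_cons, Matrix.tail_cons]
  nlinarith

lemma conj_mul_add_conj_mul_eq_one (h : normSq z + normSq w = 1) :
    conj z * z + conj w * w = 1 := by
  rw [← Complex.normSq_eq_conj_mul_self, ← Complex.normSq_eq_conj_mul_self]
  exact_mod_cast h

lemma hopf_eq_hopf_iff_of_normSq (hn : normSq z + normSq w = 1)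
    (hn' : normSq z' + normSq w' = 1) : hopf z' w' = hopf z w ↔ z * w' = w * z' := by
  have hu := conj_mul_add_conj_mul_eq_one hn
  have hu' := conj_mul_add_conj_mul_eq_one hn'
  rw [hopf_eq_hopf_iff]
  -- both directions go through `(z', w') = l • (z, w)`
  set l := conj z * z' + conj w * w'
  constructor
  · rintro ⟨hc, hd⟩
    have hnz : conj z' * z' = conj z * z := by
      rw [← Complex.normSq_eq_conj_mul_self, ← Complex.normSq_eq_conj_mul_self]
      exact_mod_cast (by linarith : normSq z' = normSq z)
    have hnw : conj w' * w' = conj w * w := by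
      rw [← Complex.normSq_eq_conj_mul_self, ← Complex.normSq_eq_conj_mul_self]
      exact_mod_cast (by linarith : normSq w' = normSq w)
    have hc' : conj z' * w' = conj z * w := by simpa using congrArg conj hc
    have hz' : z' = l * z := by linear_combination -z' * hu - z' * hnw + w' * hc
    have hw' : w' = l * w := by linear_combination -w' * hu - w' * hnz + z' * hc'
    rw [hz', hw']
    ring
  · intro hx
    have hz' : z' = l * z := by linear_combination -z' * hu - conj w * hx
    have hw' : w' = l * w := by linear_combination -w' * hu + conj z * hx
    have hl : normSq l = 1 := by
      rw [hz', hw', Complex.normSq_mul, Complex.normSq_mul, ← mul_add, hn, mul_one] at hn'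
      exact hn'
    have hlC : conj l * l = 1 := by rw [← Complex.normSq_eq_conj_mul_self, hl, Complex.ofReal_one]
    rw [hz', hw', Complex.normSq_mul, Complex.normSq_mul, hl, map_mul]
    constructor
    · linear_combination (z * conj w) * hlC
    · ring

lemma hopf_eq_neg_hopf_iff_of_normSq (hn : normSq z + normSq w = 1)
    (hn' : normSq z' + normSq w' = 1) : hopf z' w' = -hopf z w ↔ conj z * z' + conj w * w' = 0 := by
  rw [← hopf_neg_conj, hopf_eq_hopf_iff_of_normSq _ hn']
  · constructor <;> intro h <;> linear_combination -h
  · simpa [add_comm] using hn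

lemma exists_hopf_eq {v : EuclideanSpace ℝ (Fin 3)} (hv : ‖v‖ = 1) :
    ∃ z w : ℂ, normSq z + normSq w = 1 ∧ hopf z w = v := by
  have hsum := sum_sq_of_norm_eq_one hv
  by_cases hsouth : v 2 = -1
  · refine ⟨0, 1, by simp, ?_⟩
    have h0 : v 0 = 0 := by nlinarith
    have h1 : v 1 = 0 := by nlinarith
    ext i
    fin_cases i <;> simp [hopf, h0, h1, hsouth]
  · have ht : 0 < 1 + v 2 := by
      rcases (show -1 ≤ v 2 by nlinarith).lt_or_eq with h | h
      · linarith
      · exact absurd h.symm hsouth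
    set r := √((1 + v 2) / 2)
    have hr : 0 < r := Real.sqrt_pos.2 (by linarith)
    have hr2 : r ^ 2 = (1 + v 2) / 2 := Real.sq_sqrt (by linarith)
    refine ⟨r, ⟨v 0 / (2 * r), -(v 1 / (2 * r))⟩, ?_, ?_⟩
    · simp only [Complex.normSq_ofReal, Complex.normSq_mk]
      field_simp
      nlinarith
    · ext i
      fin_cases i <;>
        simp only [hopf, Fin.isValue, mul_re, ofReal_re, conj_re, ofReal_im, conj_im, mul_im,
          normSq_ofReal, normSq_mk, Fin.zero_eta, Fin.mk_one, Fin.reduceFinMk, PiLp.toLp_apply,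
          cons_val] <;>
        field_simp <;>
        nlinarith

lemma continuous_hopf : Continuous fun p : ℂ × ℂ => hopf p.1 p.2 := by
  unfold hopf
  fun_prop

end hopf

lemma sph_circle_ext_iff {p q : Sph × Circle} : p = q ↔ p.1.1 = q.1.1 ∧ (p.2 : ℂ) = q.2 :=
  ⟨fun h => h ▸ ⟨rfl, rfl⟩, fun ⟨h1, h2⟩ => Prod.ext (Subtype.ext h1) (Circle.ext h2)⟩

def antipodalInvariant (p : Sph × Circle) : Fin 3 → ℂ := fun i => (p.2 : ℂ) * p.1.1 i

lemma antipodalInvariant_eq_iff {p q : Sph × Circle} :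
    antipodalInvariant p = antipodalInvariant q ↔ p = q ∨ relA p q := by
  obtain ⟨⟨v, hv⟩, s⟩ := p
  obtain ⟨⟨v', hv'⟩, s'⟩ := q
  constructor
  · intro h
    set u : ℂ := conj (s' : ℂ) * s
    have hs' : conj (s' : ℂ) * s' = 1 := by simp [← Complex.normSq_eq_conj_mul_self]
    have hvu : ∀ i, (v' i : ℂ) = u * v i := fun i => by
      have hi : (s : ℂ) * v i = s' * v' i := congrFun h i
      linear_combination (-conj (s' : ℂ)) * hi - v' i * hs'
    -- `u` is the real number `⟪v, v'⟫`, of modulus one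
    set r := v 0 * v' 0 + v 1 * v' 1 + v 2 * v' 2
    have hur : u = r := by
      have hsq := congrArg ((↑) : ℝ → ℂ) (sum_sq_of_norm_eq_one hv)
      push_cast [r] at hsq ⊢
      linear_combination -(v 0 * hvu 0) - v 1 * hvu 1 - v 2 * hvu 2 - u * hsq
    have hr : r * r = 1 := by
      have hu : normSq u = 1 := by simp [u]
      rwa [hur, Complex.normSq_ofReal] at hu
    have hv'r : ∀ i, v' i = r * v i := fun i => by exact_mod_cast hur ▸ hvu i
    have hsr : (s : ℂ) = r * s' := by linear_combination hur * s' - (s : ℂ) * hs'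
    rcases mul_self_eq_one_iff.1 hr with h1 | h1
    · left
      refine sph_circle_ext_iff.2 ⟨PiLp.ext fun i => ?_, ?_⟩
      · simp [hv'r, h1]
      · simp [hsr, h1]
    · right
      refine ⟨PiLp.ext fun i => ?_, ?_⟩
      · simp [hv'r, h1]
      · simp [hsr, h1]
  · rintro (h | ⟨h1, h2⟩)
    · rw [h]
    · funext i
      simp only at h1 h2
      simp only [antipodalInvariant, h1, h2, PiLp.neg_apply]
      push_cast
      ring

lemma antipodalInvariant_respects {p q : Sph × Circle} (h : relA p q) :
    antipodalInvariant p = antipodalInvariant q :=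
  antipodalInvariant_eq_iff.2 (Or.inr h)

lemma quot_mk_relA_eq_iff {p q : Sph × Circle} :
    Quot.mk relA p = Quot.mk relA q ↔ p = q ∨ relA p q := by
  constructor
  · intro h
    exact antipodalInvariant_eq_iff.1
      (congrArg (Quot.lift antipodalInvariant fun _ _ => antipodalInvariant_respects) h)
  · rintro (rfl | h)
    · rfl
    · exact Quot.sound h

lemma continuous_antipodalInvariant : Continuous antipodalInvariant := by
  unfold antipodalInvariant
  fun_prop

instance : T2Space (Quot relA) := by
  refine T2Space.of_injective_continuous
    (f := Quot.lift antipodalInvariant fun _ _ => antipodalInvariant_respects) ?_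
    (continuous_quot_lift _ continuous_antipodalInvariant)
  rintro ⟨p⟩ ⟨q⟩ h
  exact quot_mk_relA_eq_iff.2 (antipodalInvariant_eq_iff.1 h)

def hopfDet (A : U2) : Sph × Circle :=
  (⟨hopf (A.1 0 0) (A.1 1 0), norm_hopf (U2.normSq_col_zero A)⟩,
    ⟨A.1.det, mem_sphere_zero_iff_norm.2 (CStarRing.norm_of_mem_unitary (det_of_mem_unitary A.2))⟩)

lemma quot_mk_hopfDet_eq_iff (a b : U2) :
    Quot.mk relA (hopfDet a) = Quot.mk relA (hopfDet b) ↔ a⁻¹ * b ∈ PreSet := by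
  have ha := U2.normSq_col_zero a
  have hb := U2.normSq_col_zero b
  have hδ := U2.conj_det_mul_det a
  rw [quot_mk_relA_eq_iff, sph_circle_ext_iff, mem_preSet_iff,
    U2.inv_mul_apply_one_zero_eq_zero_iff, U2.inv_mul_apply, U2.det_inv_mul,
    mul_eq_iff_eq_mul_of_mul_eq_one hδ, mul_eq_iff_eq_mul_of_mul_eq_one hδ, one_mul, neg_one_mul]
  simp only [hopfDet, relA]
  rw [eq_comm (a := hopf _ _), eq_comm (a := a.1.det), hopf_eq_hopf_iff_of_normSq ha hb,
    hopf_eq_neg_hopf_iff_of_normSq ha hb]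

lemma coe_O2 : (O2 : Set U2) = PreSet := by
  let H := Subgroup.ofFibers (fun A => Quot.mk relA (hopfDet A)) PreSet quot_mk_hopfDet_eq_iff
  have hJ : !![(0 : ℂ), -1; -1, 0] ∈ unitaryGroup (Fin 2) ℂ := by
    rw [mem_unitaryGroup_iff]
    ext i j
    fin_cases i <;> fin_cases j <;> simp [mul_apply, Fin.sum_univ_two]
  let J : U2 := ⟨_, hJ⟩
  have hJO2 : J ∈ O2 := Subgroup.subset_closure (Or.inr rfl)
  refine subset_antisymm (show O2 ≤ H from ?_) fun A hA => ?_
  · rw [O2, Subgroup.closure_le]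
    rintro A (⟨-, h10, hdet⟩ | hA)
    · exact (mem_preSet_iff A).2 (Or.inl ⟨h10, hdet⟩)
    · have hA : A.1 = !![0, -1; -1, 0] := hA
      exact (mem_preSet_iff A).2 (Or.inr ⟨by simp [hA], by simp [hA, det_fin_two]⟩)
  · rcases (mem_preSet_iff A).1 hA with ⟨h10, hdet⟩ | ⟨h00, hdet⟩
    · exact Subgroup.subset_closure (Or.inl ⟨by simp [U2.apply_zero_one, h10], h10, hdet⟩)
    · rw [SetLike.mem_coe, ← O2.mul_mem_cancel_left hJO2]
      refine Subgroup.subset_closure (Or.inl ⟨?_, ?_, ?_⟩)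
      · simp [J, mul_apply, Fin.sum_univ_two, U2.apply_one_one, h00]
      · simp [J, mul_apply, Fin.sum_univ_two, h00]
      · rw [UnitaryGroup.mul_val, det_mul, hdet]
        simp [J, det_fin_two]

lemma hopfDet_surjective : Function.Surjective hopfDet := by
  rintro ⟨⟨v, hv⟩, s⟩
  obtain ⟨z, w, hn, rfl⟩ := exists_hopf_eq hv
  have hu := conj_mul_add_conj_mul_eq_one hn
  have hs : conj (s : ℂ) * s = 1 := by simp [← Complex.normSq_eq_conj_mul_self]
  refine ⟨⟨_, mem_unitaryGroup_fin_two hu hs⟩, sph_circle_ext_iff.2 ⟨by simp [hopfDet], ?_⟩⟩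
  simp only [hopfDet, of_apply, cons_val', cons_val_zero, cons_val_fin_one, cons_val_one,
    det_fin_two]
  linear_combination (s : ℂ) * hu

lemma continuous_hopfDet : Continuous hopfDet := by
  refine .prodMk (.subtype_mk ?_ _) (.subtype_mk ?_ _)
  · exact continuous_hopf.comp <|
      (continuous_subtype_val.matrix_elem 0 0).prodMk (continuous_subtype_val.matrix_elem 1 0)
  · fun_prop

def quotientHopfDet : U2 ⧸ O2 → Quot relA :=
  Quotient.lift (fun A => Quot.mk relA (hopfDet A)) fun a b h =>
    (quot_mk_hopfDet_eq_iff a b).2 (coe_O2 ▸ QuotientGroup.leftRel_apply.1 h)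

lemma quotientHopfDet_bijective : Function.Bijective quotientHopfDet := by
  refine ⟨fun x y => ?_, fun q => ?_⟩
  · induction x using QuotientGroup.induction_on with | H a => ?_
    induction y using QuotientGroup.induction_on with | H b => ?_
    intro h
    rw [QuotientGroup.eq, ← SetLike.mem_coe, coe_O2]
    exact (quot_mk_hopfDet_eq_iff a b).1 h
  · obtain ⟨p, rfl⟩ := Quot.exists_rep q
    obtain ⟨A, rfl⟩ := hopfDet_surjective p
    exact ⟨A, rfl⟩

lemma continuous_quotientHopfDet : Continuous quotientHopfDet :=
  continuous_quot_mk.comp continuous_hopfDet |>.quotient_lift _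

theorem stmt_15 :
    (O2 : Set U2) = PreSet ∧ Nonempty ((U2 ⧸ O2) ≃ₜ Quot relA) :=
  ⟨coe_O2, ⟨continuous_quotientHopfDet.homeoOfEquivCompactToT2
    (f := Equiv.ofBijective _ quotientHopfDet_bijective)⟩⟩

end
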